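/- Let μ be a 2-cocycle on A = (ℤ/pℤ) × (ℤ/pℤ) with values in kˣ such that Alt(μ) is non-degenerate. Then there is a unique group automorphism ι of A such that Alt(μ)(x, ι(a)) = χ(x,a) for all x,a ∈ A; the map μ'(x,y) := μ(ι(x), ι(y))⁻¹ is a 2-cocycle; and μ' is cohomologous to μ if and only if Alt(μ) = ω or Alt(μ) = ω⁻¹. In particular, there are exactly two cohomology classes of such μ with μ' cohomologous to μ, and these two classes are inverses of each other. -/

import Mathlib

/-!
Over an algebraically closed field a 2-cocycle is determined up to coboundaries by `Alt(μ)`: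
the quotient of two cocycles with the same alternating form is symmetric, so it defines an
abelian extension of `A` by the divisible, hence injective, group `kˣ`; that extension splits.
On `(ℤ/p)²` every alternating bicharacter is `ξ ^ (t · det)`, non-degenerate iff `t ≠ 0`; then
`ι a = t⁻¹ • (-a₁, a₂)` and `Alt(μ') = ξ ^ (t⁻¹ · det)`. Hence `μ' ∼ μ` iff `t = t⁻¹`, i.e.
`t = ±1`, and the two classes are those of `ξ ^ (x₁ y₂)` and of its inverse.
-/

/-- A 2-cocycle on an abelian group `A` with values in `kˣ` (trivial action). -/
def IsTwoCocycle {A : Type*} [AddCommGroup A] {k : Type*} [Field k]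
    (μ : A → A → kˣ) : Prop :=
  ∀ a b c : A, μ a b * μ (a + b) c = μ b c * μ a (b + c)

/-- A 2-coboundary on an abelian group `A` with values in `kˣ`. -/
def IsCoboundary {A : Type*} [AddCommGroup A] {k : Type*} [Field k]
    (μ : A → A → kˣ) : Prop :=
  ∃ f : A → kˣ, ∀ a b : A, μ a b = f a * f b * (f (a + b))⁻¹

/-- Two 2-cocycles are cohomologous if their pointwise quotient is a coboundary. -/
def Cohomologous {A : Type*} [AddCommGroup A] {k : Type*} [Field k]
    (μ ν : A → A → kˣ) : Prop :=
  IsCoboundary (fun a b => μ a b * (ν a b)⁻¹)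

/-- The alternating bicharacter `Alt(μ)(x,y) = μ(x,y)·μ(y,x)⁻¹` of a 2-cochain. -/
def AltForm {A : Type*} [AddCommGroup A] {k : Type*} [Field k]
    (μ : A → A → kˣ) : A → A → kˣ :=
  fun x y => μ x y * (μ y x)⁻¹

/-- A 2-cocycle `ν` with non-degenerate `Alt(ν)` is *self-dual* (relative to
the hyperbolic form `χ`) if for the automorphism `ι` determined by
`Alt(ν)(x, ι a) = χ(x,a)` the cocycle `ν'(x,y) = ν(ι x, ι y)⁻¹` is
cohomologous to `ν`. -/
def SelfDualCocycle {A : Type*} [AddCommGroup A] {k : Type*} [Field k]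
    (χ : A → A → kˣ) (ν : A → A → kˣ) : Prop :=
  IsTwoCocycle ν ∧ (∀ x : A, (∀ y : A, AltForm ν x y = 1) → x = 0) ∧
  ∃ ι : A ≃+ A, (∀ x a : A, AltForm ν x (ι a) = χ x a) ∧
    Cohomologous (fun x y => (ν (ι x) (ι y))⁻¹) ν

section Cocycle

variable {A : Type*} [AddCommGroup A] {k : Type*} [Field k] {μ ν σ : A → A → kˣ}

theorem IsTwoCocycle.mul_inv (hμ : IsTwoCocycle μ) (hν : IsTwoCocycle ν) :
    IsTwoCocycle fun a b => μ a b * (ν a b)⁻¹ := fun a b c => by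
  rw [mul_mul_mul_comm, ← _root_.mul_inv, hμ, hν, _root_.mul_inv, mul_mul_mul_comm]

theorem IsTwoCocycle.apply_zero_left (hμ : IsTwoCocycle μ) (a : A) : μ 0 a = μ 0 0 := by
  simpa using (hμ 0 0 a).symm

theorem IsTwoCocycle.altForm_add_left (hμ : IsTwoCocycle μ) (a b c : A) :
    AltForm μ (a + b) c = AltForm μ a c * AltForm μ b c := by
  have h₁ := congrArg Units.val (hμ a b c)
  have h₂ := congrArg Units.val (hμ c a b)
  have h₃ := congrArg Units.val (hμ a c b)
  rw [add_comm c a] at h₂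
  rw [add_comm c b] at h₃
  push_cast at h₁ h₂ h₃
  ext
  simp only [AltForm, Units.val_mul, Units.val_inv_eq_inv_val]
  field_simp
  apply mul_left_cancel₀ (μ a b).ne_zero
  linear_combination (μ c a * μ c b : k) * h₁ - (μ c a * μ b c : k) * h₃ + (μ b c * μ a c : k) * h₂

theorem IsTwoCocycle.inv (hμ : IsTwoCocycle μ) : IsTwoCocycle fun a b => (μ a b)⁻¹ :=
  fun a b c => by simp only [← _root_.mul_inv, hμ a b c]

theorem IsTwoCocycle.comp {F : Type*} [FunLike F A A] [AddHomClass F A A]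
    (hμ : IsTwoCocycle μ) (f : F) : IsTwoCocycle fun a b => μ (f a) (f b) := fun a b c => by
  simp only [map_add, hμ (f a) (f b) (f c)]

theorem altForm_swap (x y : A) : AltForm μ x y = (AltForm μ y x)⁻¹ := by
  simp [AltForm]

theorem altForm_inv (x y : A) : AltForm (fun a b => (μ a b)⁻¹) x y = (AltForm μ x y)⁻¹ := by
  simp [AltForm, mul_comm]

theorem altForm_self (x : A) : AltForm μ x x = 1 := mul_inv_cancel _

def IsTwoCocycle.altFormChar (hμ : IsTwoCocycle μ) (y : A) : AddChar A kˣ where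
  toFun x := AltForm μ x y
  map_zero_eq_one' := by simpa using hμ.altForm_add_left 0 0 y
  map_add_eq_mul' a b := hμ.altForm_add_left a b y

theorem IsTwoCocycle.altFormChar_apply (hμ : IsTwoCocycle μ) (x y : A) :
    hμ.altFormChar y x = AltForm μ x y := rfl

theorem altForm_apply_eq_iff (x y : A) :
    AltForm μ x y = AltForm ν x y ↔ μ x y * (ν x y)⁻¹ = μ y x * (ν y x)⁻¹ := by
  simp only [AltForm, ← div_eq_mul_inv]
  rw [div_eq_div_iff_mul_eq_mul, div_eq_div_iff_mul_eq_mul, mul_comm (ν x y)]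

theorem IsTwoCocycle.eq_of_altForm_eq (hμ : IsTwoCocycle μ)
    (hnd : ∀ x, (∀ y, AltForm μ x y = 1) → x = 0) {a b : A}
    (h : ∀ x, AltForm μ x a = AltForm μ x b) : a = b := by
  refine sub_eq_zero.mp (hnd _ fun y => ?_)
  rw [← hμ.altFormChar_apply, AddChar.map_sub_eq_div, hμ.altFormChar_apply, hμ.altFormChar_apply,
    altForm_swap, h, ← altForm_swap, div_self']

theorem Cohomologous.altForm_eq (h : Cohomologous μ ν) (x y : A) :
    AltForm μ x y = AltForm ν x y := by
  obtain ⟨f, hf⟩ := h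
  rw [altForm_apply_eq_iff]
  exact (hf x y).trans (by rw [add_comm, mul_comm (f x)]; exact (hf y x).symm)

/-- The abelian extension of `A` by `kˣ` with cocycle `σ`; its unit is `(σ(0,0)⁻¹, 0)` since `σ`
need not be normalised. -/
abbrev IsTwoCocycle.extensionCommGroup (hσ : IsTwoCocycle σ) (hsymm : ∀ a b, σ a b = σ b a) :
    CommGroup (kˣ × A) :=
  { mul x y := (x.1 * y.1 * σ x.2 y.2, x.2 + y.2)
    one := ((σ 0 0)⁻¹, 0)
    inv x := ((x.1 * σ x.2 (-x.2) * σ 0 0)⁻¹, -x.2)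
    mul_assoc x y z := Prod.ext (by
      change x.1 * y.1 * σ x.2 y.2 * z.1 * σ (x.2 + y.2) z.2
        = x.1 * (y.1 * z.1 * σ y.2 z.2) * σ x.2 (y.2 + z.2)
      have h := congrArg Units.val (hσ x.2 y.2 z.2)
      ext
      push_cast at h ⊢
      linear_combination (x.1 * y.1 * z.1 : k) * h) (add_assoc _ _ _)
    one_mul x := Prod.ext (by
      change (σ 0 0)⁻¹ * x.1 * σ 0 x.2 = x.1
      rw [hσ.apply_zero_left x.2, mul_right_comm, inv_mul_cancel, one_mul]) (zero_add _)
    mul_one x := Prod.ext (by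
      change x.1 * (σ 0 0)⁻¹ * σ x.2 0 = x.1
      rw [hsymm x.2, hσ.apply_zero_left x.2, inv_mul_cancel_right]) (add_zero _)
    inv_mul_cancel x := Prod.ext (by
      change (x.1 * σ x.2 (-x.2) * σ 0 0)⁻¹ * x.1 * σ (-x.2) x.2 = (σ 0 0)⁻¹
      rw [hsymm]
      group) (neg_add_cancel _)
    mul_comm x y := Prod.ext (by
      change x.1 * y.1 * σ x.2 y.2 = y.1 * x.1 * σ y.2 x.2
      rw [hsymm, mul_comm x.1]) (add_comm _ _) }

end Cocycle

section AlgClosed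

variable {k : Type*} [Field k] [IsAlgClosed k]

theorem IsAlgClosed.exists_zpow_eq_unit {n : ℤ} (hn : n ≠ 0) (u : kˣ) : ∃ w : kˣ, w ^ n = u := by
  have exists_pow_eq (v : kˣ) : ∃ w : kˣ, w ^ n.natAbs = v := by
    obtain ⟨z, hz⟩ := IsAlgClosed.exists_pow_nat_eq (v : k) (Int.natAbs_pos.mpr hn)
    have hz0 : z ≠ 0 := by
      rintro rfl
      rw [zero_pow (Int.natAbs_ne_zero.mpr hn)] at hz
      exact v.ne_zero hz.symm
    exact ⟨Units.mk0 z hz0, Units.ext (by simpa using hz)⟩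
  rcases Int.natAbs_eq n with h | h
  · obtain ⟨w, hw⟩ := exists_pow_eq u
    exact ⟨w, by rw [h, zpow_natCast, hw]⟩
  · obtain ⟨w, hw⟩ := exists_pow_eq u⁻¹
    exact ⟨w, by rw [h, zpow_neg, zpow_natCast, hw, inv_inv]⟩

/-- `kˣ` is divisible, hence an injective abelian group. -/
theorem IsAlgClosed.exists_retraction_units {G : Type*} [CommGroup G] (i : kˣ →* G)
    (hi : Function.Injective i) : ∃ r : G →* kˣ, r.comp i = MonoidHom.id kˣ := by
  let _ : DivisibleBy (Additive kˣ) ℤ := divisibleByOfSMulRightSurj _ _ fun hn u =>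
    let ⟨w, hw⟩ := IsAlgClosed.exists_zpow_eq_unit hn u.toMul
    ⟨Additive.ofMul w, congrArg Additive.ofMul hw⟩
  obtain ⟨r, hr⟩ := (Module.Baer.of_divisible (Additive kˣ)).extension_property_addMonoidHom
    (MonoidHom.toAdditive i) hi (AddMonoidHom.id _)
  exact ⟨MonoidHom.toAdditive.symm r,
    MonoidHom.ext fun s => congrArg Additive.toMul (DFunLike.congr_fun hr (Additive.ofMul s))⟩

end AlgClosed

section SymmetricCocycle

variable {A : Type*} [AddCommGroup A] {k : Type*} [Field k] [IsAlgClosed k] {μ ν σ : A → A → kˣ}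

/-- A splitting of the extension, which exists because `kˣ` is divisible, trivialises `σ`. -/
theorem IsTwoCocycle.isCoboundary_of_symm (hσ : IsTwoCocycle σ) (hsymm : ∀ a b, σ a b = σ b a) :
    IsCoboundary σ := by
  let _ := hσ.extensionCommGroup hsymm
  let i : kˣ →* kˣ × A :=
  { toFun s := (s * (σ 0 0)⁻¹, 0)
    map_one' := Prod.ext (one_mul _) rfl
    map_mul' s t := Prod.ext (by
      change s * t * (σ 0 0)⁻¹ = s * (σ 0 0)⁻¹ * (t * (σ 0 0)⁻¹) * σ 0 0
      ext
      push_cast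
      field_simp) (add_zero _).symm }
  have hi : Function.Injective i := fun s t hst => mul_right_cancel (congrArg Prod.fst hst)
  obtain ⟨r, hr⟩ := IsAlgClosed.exists_retraction_units i hi
  refine ⟨fun a => r (1, a), fun a b => ?_⟩
  have hsplit : ((1, a) * (1, b) : kˣ × A) = i (σ a b) * (1, a + b) := Prod.ext (by
    change 1 * 1 * σ a b = σ a b * (σ 0 0)⁻¹ * 1 * σ 0 (a + b)
    rw [hσ.apply_zero_left (a + b), one_mul, one_mul, mul_one, inv_mul_cancel_right])
    (zero_add _).symm
  have hri : r (i (σ a b)) = σ a b := DFunLike.congr_fun hr (σ a b)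
  rw [eq_mul_inv_iff_mul_eq, ← map_mul, hsplit, map_mul, hri]

theorem IsTwoCocycle.cohomologous_iff_altForm_eq (hμ : IsTwoCocycle μ) (hν : IsTwoCocycle ν) :
    Cohomologous μ ν ↔ ∀ x y, AltForm μ x y = AltForm ν x y :=
  ⟨Cohomologous.altForm_eq, fun h => (hμ.mul_inv hν).isCoboundary_of_symm fun a b =>
    (altForm_apply_eq_iff a b).mp (h a b)⟩

end SymmetricCocycle

def symplecticForm {R : Type*} [CommRing R] (x y : R × R) : R := x.1 * y.2 - x.2 * y.1

section RootChar

variable {k : Type*} [Field k] {n : ℕ} [NeZero n] {ξ : kˣ}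

def rootChar (hξ : IsPrimitiveRoot ξ n) : AddChar (ZMod n) kˣ :=
  AddChar.zmodChar n hξ.pow_eq_one

theorem rootChar_injective (hξ : IsPrimitiveRoot ξ n) : Function.Injective (rootChar hξ) :=
  AddChar.injective_iff.mpr fun u =>
    ((AddChar.zmodChar_primitive_of_primitive_root n hξ).zmod_char_eq_one_iff n u).mp

theorem rootChar_pow (hξ : IsPrimitiveRoot ξ n) (u v : ZMod n) :
    rootChar hξ u ^ v.val = rootChar hξ (v * u) := by
  rw [← AddChar.map_nsmul_eq_pow, nsmul_eq_mul, ZMod.natCast_zmod_val]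

theorem rootChar_mul_symplecticForm_inj (hξ : IsPrimitiveRoot ξ n) {s t : ZMod n} :
    (∀ x y, rootChar hξ (s * symplecticForm x y) = rootChar hξ (t * symplecticForm x y)) ↔
      s = t := by
  refine ⟨fun h => ?_, by rintro rfl _ _; rfl⟩
  simpa [symplecticForm] using rootChar_injective hξ (h (1, 0) (0, 1))

theorem IsTwoCocycle.exists_altForm_eq (hξ : IsPrimitiveRoot ξ n)
    {μ : ZMod n × ZMod n → ZMod n × ZMod n → kˣ} (hμ : IsTwoCocycle μ) :
    ∃ t : ZMod n, ∀ x y, AltForm μ x y = rootChar hξ (t * symplecticForm x y) := by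
  have expand (x y : ZMod n × ZMod n) :
      AltForm μ x y = AltForm μ (1, 0) y ^ x.1.val * AltForm μ (0, 1) y ^ x.2.val := by
    have hx : x = x.1.val • ((1 : ZMod n), (0 : ZMod n)) + x.2.val • ((0 : ZMod n), (1 : ZMod n)) :=
      by ext <;> simp
    rw [← hμ.altFormChar_apply, hx, AddChar.map_add_eq_mul, AddChar.map_nsmul_eq_pow,
      AddChar.map_nsmul_eq_pow, ← hx]
    rfl
  have hc : AltForm μ (1, 0) (0, 1) ∈ rootsOfUnity n k := by
    rw [mem_rootsOfUnity, ← hμ.altFormChar_apply, ← AddChar.map_nsmul_eq_pow]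
    have : n • ((1 : ZMod n), (0 : ZMod n)) = 0 := by ext <;> simp
    rw [this, AddChar.map_zero_eq_one]
  obtain ⟨i, -, hi⟩ := hξ.eq_pow_of_mem_rootsOfUnity hc
  refine ⟨i, fun x y => ?_⟩
  have hc' : AltForm μ (1, 0) (0, 1) = rootChar hξ i := by
    rw [← hi, rootChar, AddChar.zmodChar_apply']
  have he₁ : AltForm μ (1, 0) y = rootChar hξ (y.2 * i) := by
    rw [altForm_swap, expand, altForm_self, altForm_swap (0, 1), hc', one_pow, one_mul, inv_pow,
      inv_inv, rootChar_pow]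
  have he₂ : AltForm μ (0, 1) y = rootChar hξ (-(y.1 * i)) := by
    rw [altForm_swap, expand, altForm_self, hc', one_pow, mul_one, rootChar_pow,
      AddChar.map_neg_eq_inv]
  rw [expand, he₁, he₂, rootChar_pow, rootChar_pow, ← AddChar.map_add_eq_mul, symplecticForm]
  ring_nf

theorem isTwoCocycle_rootChar_fst_mul_snd (hξ : IsPrimitiveRoot ξ n) :
    IsTwoCocycle fun x y : ZMod n × ZMod n => rootChar hξ (x.1 * y.2) := fun a b c => by
  simp only [← AddChar.map_add_eq_mul, Prod.fst_add, Prod.snd_add]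
  ring_nf

theorem altForm_rootChar_fst_mul_snd (hξ : IsPrimitiveRoot ξ n) (x y : ZMod n × ZMod n) :
    AltForm (fun x y : ZMod n × ZMod n => rootChar hξ (x.1 * y.2)) x y =
      rootChar hξ (symplecticForm x y) := by
  rw [AltForm, ← AddChar.map_neg_eq_inv, ← AddChar.map_add_eq_mul, symplecticForm]
  ring_nf

end RootChar

def hyperbolicForm {R : Type*} [CommRing R] (x y : R × R) : R := x.1 * y.2 + x.2 * y.1

section Prime

variable {k : Type*} [Field k] {p : ℕ} [Fact p.Prime] {ξ : kˣ} (hξ : IsPrimitiveRoot ξ p)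
  {μ : ZMod p × ZMod p → ZMod p × ZMod p → kˣ} {t : ZMod p}

def hyperbolicAut (ht : t ≠ 0) : (ZMod p × ZMod p) ≃+ (ZMod p × ZMod p) :=
  (LinearEquiv.prodCongr (LinearEquiv.smulOfNeZero _ _ (-t⁻¹) (by simpa))
    (LinearEquiv.smulOfNeZero _ _ t⁻¹ (by simpa))).toAddEquiv

theorem hyperbolicAut_apply (ht : t ≠ 0) (a : ZMod p × ZMod p) :
    hyperbolicAut ht a = (-t⁻¹ * a.1, t⁻¹ * a.2) := rfl

theorem mul_symplecticForm_hyperbolicAut (ht : t ≠ 0) (x a : ZMod p × ZMod p) :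
    t * symplecticForm x (hyperbolicAut ht a) = hyperbolicForm x a := by
  simp only [symplecticForm, hyperbolicForm, hyperbolicAut_apply]
  field_simp
  ring

theorem symplecticForm_hyperbolicAut (ht : t ≠ 0) (x y : ZMod p × ZMod p) :
    symplecticForm (hyperbolicAut ht x) (hyperbolicAut ht y) =
      -(t⁻¹ * t⁻¹) * symplecticForm x y := by
  simp only [symplecticForm, hyperbolicAut_apply]
  ring

section OfAltForm

include hξ

variable (hAlt : ∀ x y, AltForm μ x y = rootChar hξ (t * symplecticForm x y))
include hAlt

theorem nondegenerate_iff_ne_zero :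
    (∀ x, (∀ y, AltForm μ x y = 1) → x = 0) ↔ t ≠ 0 := by
  refine ⟨fun hnd ht => ?_, fun ht x hx => ?_⟩
  · have : ((1 : ZMod p), (0 : ZMod p)) = 0 := hnd _ fun y => by simp [hAlt, ht]
    simpa using congrArg Prod.fst this
  · have h (y) : t * symplecticForm x y = 0 :=
      rootChar_injective hξ (by rw [← hAlt, hx, AddChar.map_zero_eq_one])
    have h₁ := h (0, 1)
    have h₂ := h (1, 0)
    simp only [symplecticForm, mul_eq_zero, ht, false_or] at h₁ h₂
    ext <;> simp_all

theorem altForm_hyperbolicAut (ht : t ≠ 0) (x a : ZMod p × ZMod p) :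
    AltForm μ x (hyperbolicAut ht a) = rootChar hξ (hyperbolicForm x a) := by
  rw [hAlt, mul_symplecticForm_hyperbolicAut]

theorem altForm_eq_hyperbolicForm_iff (hμ : IsTwoCocycle μ) (ht : t ≠ 0)
    (ι : (ZMod p × ZMod p) ≃+ (ZMod p × ZMod p)) :
    (∀ x a, AltForm μ x (ι a) = rootChar hξ (hyperbolicForm x a)) ↔ ι = hyperbolicAut ht := by
  refine ⟨fun hι => AddEquiv.ext fun a => ?_,
    by rintro rfl; exact altForm_hyperbolicAut hξ hAlt ht⟩
  refine hμ.eq_of_altForm_eq ((nondegenerate_iff_ne_zero hξ hAlt).mpr ht) fun x => ?_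
  rw [hι, altForm_hyperbolicAut hξ hAlt]

theorem altForm_dual (ht : t ≠ 0) (x y : ZMod p × ZMod p) :
    AltForm (fun x y => (μ (hyperbolicAut ht x) (hyperbolicAut ht y))⁻¹) x y =
      rootChar hξ (t⁻¹ * symplecticForm x y) := by
  rw [altForm_inv]
  change (AltForm μ _ _)⁻¹ = _
  rw [hAlt, ← AddChar.map_neg_eq_inv, symplecticForm_hyperbolicAut]
  congr 1
  field_simp

theorem cohomologous_dual_iff [IsAlgClosed k] (hμ : IsTwoCocycle μ) (ht : t ≠ 0) :
    Cohomologous (fun x y => (μ (hyperbolicAut ht x) (hyperbolicAut ht y))⁻¹) μ ↔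
      t = 1 ∨ t = -1 := by
  rw [(hμ.comp (hyperbolicAut ht)).inv.cohomologous_iff_altForm_eq hμ]
  simp only [altForm_dual hξ hAlt, hAlt]
  rw [rootChar_mul_symplecticForm_inj, ← mul_self_eq_one_iff, mul_eq_one_iff_eq_inv₀ ht, eq_comm]

theorem altForm_eq_symplectic_or_inv_iff :
    ((∀ x y, AltForm μ x y = rootChar hξ (symplecticForm x y)) ∨
      (∀ x y, AltForm μ x y = (rootChar hξ (symplecticForm x y))⁻¹)) ↔ t = 1 ∨ t = -1 := by
  rw [← rootChar_mul_symplecticForm_inj hξ (s := t) (t := 1),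
    ← rootChar_mul_symplecticForm_inj hξ (s := t) (t := -1)]
  simp only [hAlt, one_mul, neg_one_mul, AddChar.map_neg_eq_inv]

end OfAltForm

theorem selfDualCocycle_iff [IsAlgClosed k] {ν : ZMod p × ZMod p → ZMod p × ZMod p → kˣ} :
    SelfDualCocycle (fun a b => rootChar hξ (hyperbolicForm a b)) ν ↔ IsTwoCocycle ν ∧
      ∃ t : ZMod p, (t = 1 ∨ t = -1) ∧
        ∀ x y, AltForm ν x y = rootChar hξ (t * symplecticForm x y) := by
  constructor
  · rintro ⟨hν, hnd, ι, hι, hcoh⟩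
    obtain ⟨t, ht⟩ := hν.exists_altForm_eq hξ
    have ht0 := (nondegenerate_iff_ne_zero hξ ht).mp hnd
    obtain rfl := (altForm_eq_hyperbolicForm_iff hξ ht hν ht0 ι).mp hι
    exact ⟨hν, t, (cohomologous_dual_iff hξ ht hν ht0).mp hcoh, ht⟩
  · rintro ⟨hν, t, ht1, ht⟩
    have ht0 : t ≠ 0 := by rcases ht1 with rfl | rfl <;> simp
    exact ⟨hν, (nondegenerate_iff_ne_zero hξ ht).mpr ht0, hyperbolicAut ht0,
      altForm_hyperbolicAut hξ ht ht0, (cohomologous_dual_iff hξ ht hν ht0).mpr ht1⟩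

theorem exists_selfDualCocycle_classes [IsAlgClosed k] [Fact (2 < p)] :
    ∃ μ₁ μ₂ : (ZMod p × ZMod p) → (ZMod p × ZMod p) → kˣ,
      SelfDualCocycle (fun a b => rootChar hξ (hyperbolicForm a b)) μ₁ ∧
      SelfDualCocycle (fun a b => rootChar hξ (hyperbolicForm a b)) μ₂ ∧
      ¬ Cohomologous μ₁ μ₂ ∧ Cohomologous μ₂ (fun x y => (μ₁ x y)⁻¹) ∧
      ∀ ν, SelfDualCocycle (fun a b => rootChar hξ (hyperbolicForm a b)) ν →
        Cohomologous ν μ₁ ∨ Cohomologous ν μ₂ := by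
  have hμ₁ := isTwoCocycle_rootChar_fst_mul_snd hξ
  have halt₁ := altForm_rootChar_fst_mul_snd hξ
  have halt₂ (x y : ZMod p × ZMod p) :
      AltForm (fun x y => (rootChar hξ (x.1 * y.2))⁻¹) x y =
        rootChar hξ (-1 * symplecticForm x y) := by
    rw [altForm_inv, halt₁, neg_one_mul, AddChar.map_neg_eq_inv]
  refine ⟨_, _, (selfDualCocycle_iff hξ).mpr ⟨hμ₁, 1, .inl rfl, by simpa using halt₁⟩,
    (selfDualCocycle_iff hξ).mpr ⟨hμ₁.inv, -1, .inr rfl, halt₂⟩, fun h => ?_,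
    (hμ₁.inv.cohomologous_iff_altForm_eq hμ₁.inv).mpr fun _ _ => rfl, fun ν hν => ?_⟩
  · have h10 := (hμ₁.cohomologous_iff_altForm_eq hμ₁.inv).mp h (1, 0) (0, 1)
    rw [halt₁, halt₂, rootChar_injective hξ |>.eq_iff] at h10
    exact ZMod.neg_one_ne_one (by simpa [symplecticForm] using h10.symm)
  obtain ⟨hν, s, rfl | rfl, hs⟩ := (selfDualCocycle_iff hξ).mp hν
  · exact .inl ((hν.cohomologous_iff_altForm_eq hμ₁).mpr fun x y => by rw [hs, halt₁, one_mul])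
  · exact .inr ((hν.cohomologous_iff_altForm_eq hμ₁.inv).mpr fun x y => by rw [hs, halt₂])

end Prime

theorem stmt_15_general (p : ℕ) (hp : p.Prime) (hodd : Odd p)
    (k : Type*) [Field k] [IsAlgClosed k]
    (ξ : kˣ) (hξ : IsPrimitiveRoot ξ p)
    (χ ω : (ZMod p × ZMod p) → (ZMod p × ZMod p) → kˣ)
    (hχ : ∀ a b : ZMod p × ZMod p,
      χ a b = ξ ^ ((a.1 * b.2 + a.2 * b.1).val))
    (hω : ∀ a b : ZMod p × ZMod p,
      ω a b = ξ ^ ((a.1 * b.2 - a.2 * b.1).val))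
    (μ : (ZMod p × ZMod p) → (ZMod p × ZMod p) → kˣ)
    (hμ : IsTwoCocycle μ)
    (hnd : ∀ x : ZMod p × ZMod p,
      (∀ y : ZMod p × ZMod p, AltForm μ x y = 1) → x = 0) :
    (∃! ι : (ZMod p × ZMod p) ≃+ (ZMod p × ZMod p),
      ∀ x a : ZMod p × ZMod p, AltForm μ x (ι a) = χ x a) ∧
    (∀ ι : (ZMod p × ZMod p) ≃+ (ZMod p × ZMod p),
      (∀ x a : ZMod p × ZMod p, AltForm μ x (ι a) = χ x a) →
      IsTwoCocycle (fun x y => (μ (ι x) (ι y))⁻¹) ∧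
      (Cohomologous (fun x y => (μ (ι x) (ι y))⁻¹) μ ↔
        ((∀ x y : ZMod p × ZMod p, AltForm μ x y = ω x y) ∨
         (∀ x y : ZMod p × ZMod p, AltForm μ x y = (ω x y)⁻¹)))) ∧
    (∃ μ₁ μ₂ : (ZMod p × ZMod p) → (ZMod p × ZMod p) → kˣ,
      SelfDualCocycle χ μ₁ ∧ SelfDualCocycle χ μ₂ ∧
      ¬ Cohomologous μ₁ μ₂ ∧
      Cohomologous μ₂ (fun x y => (μ₁ x y)⁻¹) ∧
      ∀ ν : (ZMod p × ZMod p) → (ZMod p × ZMod p) → kˣ,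
        SelfDualCocycle χ ν → (Cohomologous ν μ₁ ∨ Cohomologous ν μ₂)) := by
  have : Fact p.Prime := ⟨hp⟩
  obtain rfl : χ = fun a b => rootChar hξ (hyperbolicForm a b) := funext₂ hχ
  obtain rfl : ω = fun a b => rootChar hξ (symplecticForm a b) := funext₂ hω
  obtain ⟨t, ht⟩ := hμ.exists_altForm_eq hξ
  have ht0 := (nondegenerate_iff_ne_zero hξ ht).mp hnd
  have hunique := altForm_eq_hyperbolicForm_iff hξ ht hμ ht0
  refine ⟨⟨hyperbolicAut ht0, (hunique _).mpr rfl, fun ι => (hunique ι).mp⟩, fun ι hι => ?_, ?_⟩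
  · obtain rfl := (hunique ι).mp hι
    rw [cohomologous_dual_iff hξ ht hμ ht0, altForm_eq_symplectic_or_inv_iff hξ ht]
    exact ⟨(hμ.comp _).inv, Iff.rfl⟩
  have : Fact (2 < p) := ⟨hp.two_le.lt_of_ne' (by rintro rfl; norm_num at hodd)⟩
  exact exists_selfDualCocycle_classes hξ

/-- For a 2-cocycle `μ` on `A = (ℤ/pℤ)²` with non-degenerate
`Alt(μ)` there is a unique automorphism `ι` of `A` with
`Alt(μ)(x, ι a) = χ(x,a)`; the map `μ'(x,y) = μ(ι x, ι y)⁻¹` is a 2-cocycle,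
and `μ'` is cohomologous to `μ` iff `Alt(μ) = ω` or `Alt(μ) = ω⁻¹`. In
particular there are exactly two cohomology classes of such `μ` with `μ'`
cohomologous to `μ`, and these two classes are inverses of each other. -/
theorem stmt_15 (p : ℕ) (hp : p.Prime) (hodd : Odd p)
    (k : Type*) [Field k] [IsAlgClosed k] [CharZero k]
    (ξ : kˣ) (hξ : IsPrimitiveRoot ξ p)
    (χ ω : (ZMod p × ZMod p) → (ZMod p × ZMod p) → kˣ)
    (hχ : ∀ a b : ZMod p × ZMod p,
      χ a b = ξ ^ ((a.1 * b.2 + a.2 * b.1).val))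
    (hω : ∀ a b : ZMod p × ZMod p,
      ω a b = ξ ^ ((a.1 * b.2 - a.2 * b.1).val))
    (μ : (ZMod p × ZMod p) → (ZMod p × ZMod p) → kˣ)
    (hμ : IsTwoCocycle μ)
    (hnd : ∀ x : ZMod p × ZMod p,
      (∀ y : ZMod p × ZMod p, AltForm μ x y = 1) → x = 0) :
    (∃! ι : (ZMod p × ZMod p) ≃+ (ZMod p × ZMod p),
      ∀ x a : ZMod p × ZMod p, AltForm μ x (ι a) = χ x a) ∧
    (∀ ι : (ZMod p × ZMod p) ≃+ (ZMod p × ZMod p),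
      (∀ x a : ZMod p × ZMod p, AltForm μ x (ι a) = χ x a) →
      IsTwoCocycle (fun x y => (μ (ι x) (ι y))⁻¹) ∧
      (Cohomologous (fun x y => (μ (ι x) (ι y))⁻¹) μ ↔
        ((∀ x y : ZMod p × ZMod p, AltForm μ x y = ω x y) ∨
         (∀ x y : ZMod p × ZMod p, AltForm μ x y = (ω x y)⁻¹)))) ∧
    (∃ μ₁ μ₂ : (ZMod p × ZMod p) → (ZMod p × ZMod p) → kˣ,
      SelfDualCocycle χ μ₁ ∧ SelfDualCocycle χ μ₂ ∧
      ¬ Cohomologous μ₁ μ₂ ∧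
      Cohomologous μ₂ (fun x y => (μ₁ x y)⁻¹) ∧
      ∀ ν : (ZMod p × ZMod p) → (ZMod p × ZMod p) → kˣ,
        SelfDualCocycle χ ν → (Cohomologous ν μ₁ ∨ Cohomologous ν μ₂)) :=
  stmt_15_general p hp hodd k ξ hξ χ ω hχ hω μ hμ hnd
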